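/- arXiv:2109.10933 — 3 statements merged into one kernel-verified Lean document; each statement's English description precedes it below -/
import Mathlib

section
/- (Inner product/orthogonality test implies norm test) Let υ be a square-integrable random vector in ℝ^d with E[υ] = g for a nonzero g ∈ ℝ^d, and set ê := g/‖g‖. Suppose the inner product test Var(⟨υ, ê⟩) ≤ θ²‖g‖² and the orthogonality test E[‖υ − ⟨υ, ê⟩·ê‖²] ≤ ν²‖g‖² hold for some θ, ν ≥ 0. Then for every ε with ε² ≥ θ² + ν², the norm test E[‖υ − g‖²] ≤ ε²‖g‖² is satisfied. -/
/-!
Since `g = ‖g‖ • ê` with `ê` a unit vector, Pythagoras splits `υ - g` into its component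
`⟪υ, ê⟫ - ‖g‖` along `ê` and the component `υ - ⟪υ, ê⟫ • ê` orthogonal to `ê`. Taking expectations,
and using `E⟪υ, ê⟫ = ‖g‖`, the mean square of the first is the variance in the inner product test
and that of the second is the quantity in the orthogonality test, so
`E‖υ - g‖² = Var⟪υ, ê⟫ + E‖υ - ⟪υ, ê⟫ • ê‖² ≤ (θ² + ν²)‖g‖²`.
-/
open MeasureTheory ProbabilityTheory
open scoped RealInnerProductSpace

section

variable {E : Type*} [NormedAddCommGroup E] [InnerProductSpace ℝ E]

theorem norm_sub_smul_sq_of_norm_eq_one {e : E} (he : ‖e‖ = 1) (v : E) (c : ℝ) :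
    ‖v - c • e‖ ^ 2 = (⟪v, e⟫ - c) ^ 2 + ‖v - ⟪v, e⟫ • e‖ ^ 2 := by
  simp only [norm_sub_sq_real, real_inner_smul_right, norm_smul, he, mul_one, Real.norm_eq_abs,
    sq_abs]
  ring

variable [CompleteSpace E] {Ω : Type*} [MeasurableSpace Ω] {μ : Measure Ω}

theorem integral_norm_sub_smul_sq_eq_variance_add [IsFiniteMeasure μ] {υ : Ω → E}
    (hυ : MemLp υ 2 μ) {e : E} (he : ‖e‖ = 1) {c : ℝ} (hmean : ∫ ω, υ ω ∂μ = c • e) :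
    ∫ ω, ‖υ ω - c • e‖ ^ 2 ∂μ
      = variance (fun ω => ⟪υ ω, e⟫) μ + ∫ ω, ‖υ ω - ⟪υ ω, e⟫ • e‖ ^ 2 ∂μ := by
  have hcomp : MemLp (fun ω => ⟪υ ω, e⟫) 2 μ := hυ.inner_const e
  have hcomp_mean : ∫ ω, ⟪υ ω, e⟫ ∂μ = c := by
    simp_rw [real_inner_comm e]
    rw [integral_inner (hυ.integrable one_le_two), hmean, real_inner_smul_right,
      real_inner_self_eq_norm_sq, he, one_pow, mul_one]
  have hpar : Integrable (fun ω => (⟪υ ω, e⟫ - c) ^ 2) μ :=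
    (hcomp.sub (memLp_const c)).integrable_sq
  have horth : Integrable (fun ω => ‖υ ω - ⟪υ ω, e⟫ • e‖ ^ 2) μ :=
    (hυ.sub ((memLp_top_const e).smul hcomp)).norm.integrable_sq
  rw [variance_eq_integral hcomp.aemeasurable, hcomp_mean, ← integral_add hpar horth]
  exact congrArg (integral μ) (funext fun ω => norm_sub_smul_sq_of_norm_eq_one he (υ ω) c)

end

theorem inner_orth_test_implies_norm_test_general {d : ℕ} {Ω : Type*} [MeasurableSpace Ω]
    (μ : Measure Ω) [IsProbabilityMeasure μ]
    (υ : Ω → EuclideanSpace ℝ (Fin d)) (g : EuclideanSpace ℝ (Fin d)) (hg : g ≠ 0)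
    (hsq : MemLp υ 2 μ)
    (hmean : ∫ ω, υ ω ∂μ = g)
    (ehat : EuclideanSpace ℝ (Fin d)) (hehat : ehat = ‖g‖⁻¹ • g)
    (θ ν : ℝ)
    (hinner : variance (fun ω => ⟪υ ω, ehat⟫) μ ≤ θ ^ 2 * ‖g‖ ^ 2)
    (horth : ∫ ω, ‖υ ω - ⟪υ ω, ehat⟫ • ehat‖ ^ 2 ∂μ ≤ ν ^ 2 * ‖g‖ ^ 2) :
    ∀ ε : ℝ, θ ^ 2 + ν ^ 2 ≤ ε ^ 2 →
      ∫ ω, ‖υ ω - g‖ ^ 2 ∂μ ≤ ε ^ 2 * ‖g‖ ^ 2 := by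
  intro ε hε
  have hg_eq : g = ‖g‖ • ehat := by rw [hehat, smul_inv_smul₀ (norm_ne_zero_iff.mpr hg)]
  have hunit : ‖ehat‖ = 1 := hehat ▸ norm_smul_inv_norm hg
  calc ∫ ω, ‖υ ω - g‖ ^ 2 ∂μ
      = variance (fun ω => ⟪υ ω, ehat⟫) μ + ∫ ω, ‖υ ω - ⟪υ ω, ehat⟫ • ehat‖ ^ 2 ∂μ := by
        rw [hg_eq] at hmean ⊢
        exact integral_norm_sub_smul_sq_eq_variance_add hsq hunit hmean
    _ ≤ (θ ^ 2 + ν ^ 2) * ‖g‖ ^ 2 := by rw [add_mul]; exact add_le_add hinner horth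
    _ ≤ ε ^ 2 * ‖g‖ ^ 2 := by gcongr

/-- **Inner product/orthogonality test implies norm test.** If `υ` is a
square-integrable random vector in `ℝ^d` with `E[υ] = g ≠ 0`, `ê := g / ‖g‖`, and the
inner product test `Var(⟨υ, ê⟩) ≤ θ²‖g‖²` and orthogonality test
`E[‖υ − ⟨υ, ê⟩ • ê‖²] ≤ ν²‖g‖²` hold for some `θ, ν ≥ 0`, then for every `ε` with
`ε² ≥ θ² + ν²`, the norm test `E[‖υ − g‖²] ≤ ε²‖g‖²` is satisfied. -/
theorem inner_orth_test_implies_norm_test {d : ℕ} {Ω : Type*} [MeasurableSpace Ω]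
    (μ : Measure Ω) [IsProbabilityMeasure μ]
    (υ : Ω → EuclideanSpace ℝ (Fin d)) (g : EuclideanSpace ℝ (Fin d)) (hg : g ≠ 0)
    (hsq : MemLp υ 2 μ)
    (hmean : ∫ ω, υ ω ∂μ = g)
    (ehat : EuclideanSpace ℝ (Fin d)) (hehat : ehat = ‖g‖⁻¹ • g)
    (θ ν : ℝ) (hθ : 0 ≤ θ) (hν : 0 ≤ ν)
    (hinner : variance (fun ω => ⟪υ ω, ehat⟫) μ ≤ θ ^ 2 * ‖g‖ ^ 2)
    (horth : ∫ ω, ‖υ ω - ⟪υ ω, ehat⟫ • ehat‖ ^ 2 ∂μ ≤ ν ^ 2 * ‖g‖ ^ 2) :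
    ∀ ε : ℝ, θ ^ 2 + ν ^ 2 ≤ ε ^ 2 →
      ∫ ω, ‖υ ω - g‖ ^ 2 ∂μ ≤ ε ^ 2 * ‖g‖ ^ 2 :=
  inner_orth_test_implies_norm_test_general μ υ g hg hsq hmean ehat hehat θ ν hinner horth
end

section
/- A square-integrable random vector υ in ℝ^d with E[υ] = g ≠ 0 and covariance matrix Σ satisfies E[‖υ − g‖²] = trace(Σ); consequently, if θ² := ε²·⟨ê, Σ ê⟩/trace(Σ) and ν² := ε²·(trace(Σ) − ⟨ê, Σ ê⟩)/trace(Σ) (assuming trace(Σ) > 0), where ê := g/‖g‖, then θ² + ν² = ε², and the norm test E[‖υ − g‖²] ≤ ε²‖g‖² holds if and only if both the inner product test Var(⟨υ, ê⟩) ≤ θ²‖g‖² and the orthogonality test E[‖υ − ⟨υ, ê⟩·ê‖²] ≤ ν²‖g‖² hold. -/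
open MeasureTheory ProbabilityTheory
open scoped RealInnerProductSpace

/-!
Coordinatewise, `E‖υ - g‖²` is the sum of the coordinate variances, i.e. `trace Σ`, and by
bilinearity of the covariance `Var⟨υ, ê⟩ = ⟨ê, Σ ê⟩`. Since `g` is a multiple of the unit
vector `ê`, the component of `υ` orthogonal to `ê` is that of `υ - g`, so Pythagoras gives
`trace Σ = Var⟨υ, ê⟩ + E‖υ - ⟨υ, ê⟩ ê‖²`. The tolerances split `ε²‖g‖²` in the same
proportions as these two summands, so the sum is bounded iff each summand is.
-/

section UnitVector

variable {E : Type*} [NormedAddCommGroup E] [InnerProductSpace ℝ E] {e : E}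

lemma norm_sub_inner_smul_sq (he : ‖e‖ = 1) (x : E) :
    ‖x - ⟪x, e⟫ • e‖ ^ 2 = ‖x‖ ^ 2 - ⟪x, e⟫ ^ 2 := by
  rw [norm_sub_sq_real, real_inner_smul_right, norm_smul, he, mul_one, Real.norm_eq_abs, sq_abs]
  ring

lemma sub_smul_sub_inner_smul (he : ‖e‖ = 1) (x : E) (c : ℝ) :
    x - c • e - ⟪x - c • e, e⟫ • e = x - ⟪x, e⟫ • e := by
  rw [inner_sub_left, real_inner_smul_left, real_inner_self_eq_norm_sq, he]
  module

end UnitVector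

section RandomVector

variable {Ω : Type*} [MeasurableSpace Ω] {μ : Measure Ω}
  {E : Type*} [NormedAddCommGroup E] [InnerProductSpace ℝ E] [CompleteSpace E] {υ : Ω → E}

lemma variance_inner_const (hυ : Integrable υ μ) (e : E) :
    Var[fun ω => ⟪υ ω, e⟫; μ] = ∫ ω, ⟪υ ω - ∫ ω', υ ω' ∂μ, e⟫ ^ 2 ∂μ := by
  have hmean : ∫ ω, ⟪υ ω, e⟫ ∂μ = ⟪∫ ω, υ ω ∂μ, e⟫ := by
    simp_rw [real_inner_comm e]
    exact integral_inner hυ e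
  rw [variance_eq_integral (hυ.1.inner aestronglyMeasurable_const).aemeasurable, hmean]
  simp_rw [inner_sub_left]

lemma integral_norm_sub_integral_sq_eq_variance_add [IsFiniteMeasure μ] (hυ : MemLp υ 2 μ)
    {e : E} (he : ‖e‖ = 1) {c : ℝ} (hc : ∫ ω, υ ω ∂μ = c • e) :
    ∫ ω, ‖υ ω - ∫ ω', υ ω' ∂μ‖ ^ 2 ∂μ =
      Var[fun ω => ⟪υ ω, e⟫; μ] + ∫ ω, ‖υ ω - ⟪υ ω, e⟫ • e‖ ^ 2 ∂μ := by
  have hcent : MemLp (fun ω => υ ω - ∫ ω', υ ω' ∂μ) 2 μ := hυ.sub (memLp_const _)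
  have hperp : ∀ ω, ‖υ ω - ⟪υ ω, e⟫ • e‖ ^ 2 =
      ‖υ ω - ∫ ω', υ ω' ∂μ‖ ^ 2 - ⟪υ ω - ∫ ω', υ ω' ∂μ, e⟫ ^ 2 := fun ω => by
    rw [hc, ← sub_smul_sub_inner_smul he (υ ω) c, norm_sub_inner_smul_sq he]
  simp_rw [hperp, variance_inner_const (hυ.integrable one_le_two)]
  rw [integral_sub ((memLp_two_iff_integrable_sq_norm hcent.1).1 hcent)
    (hcent.inner_const e).integrable_sq]
  ring

end RandomVector

section EuclideanRandomVector

variable {Ω : Type*} [MeasurableSpace Ω] {μ : Measure Ω} {ι : Type*} [Fintype ι]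
  {υ : Ω → EuclideanSpace ℝ ι}

lemma covariance_eval_eq_integral (hυ : Integrable υ μ) (i j : ι) :
    cov[fun ω => υ ω i, fun ω => υ ω j; μ] =
      ∫ ω, (υ ω i - (∫ ω', υ ω' ∂μ) i) * (υ ω j - (∫ ω', υ ω' ∂μ) j) ∂μ := by
  rw [covariance, eval_integral_piLp hυ.eval_piLp, eval_integral_piLp hυ.eval_piLp]

lemma integral_norm_sub_integral_sq_eq_sum_variance [IsFiniteMeasure μ] (hυ : MemLp υ 2 μ) :
    ∫ ω, ‖υ ω - ∫ ω', υ ω' ∂μ‖ ^ 2 ∂μ = ∑ i, Var[fun ω => υ ω i; μ] := by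
  have hυi := hυ.eval_piLp
  simp_rw [EuclideanSpace.real_norm_sq_eq, PiLp.sub_apply,
    eval_integral_piLp (hυ.integrable one_le_two).eval_piLp]
  rw [integral_finsetSum]
  · exact Finset.sum_congr rfl fun i _ => (variance_eq_integral (hυi i).aemeasurable).symm
  · exact fun i _ => ((hυi i).sub (memLp_const _)).integrable_sq

lemma variance_inner_eq_sum_covariance [IsFiniteMeasure μ] (hυ : MemLp υ 2 μ)
    (e : EuclideanSpace ℝ ι) :
    Var[fun ω => ⟪υ ω, e⟫; μ] =
      ∑ i, ∑ j, e i * cov[fun ω => υ ω i, fun ω => υ ω j; μ] * e j := by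
  simp_rw [PiLp.inner_apply, RCLike.inner_apply, conj_trivial]
  rw [variance_fun_sum fun i => (hυ.eval_piLp i).const_mul (e i)]
  refine Finset.sum_congr rfl fun i _ => Finset.sum_congr rfl fun j _ => ?_
  rw [covariance_const_mul_left, covariance_const_mul_right]
  ring

end EuclideanRandomVector

lemma le_mul_iff_le_mul_div_and_sub_le_mul_div {q T c s : ℝ} (hq : 0 ≤ q) (hqT : q ≤ T)
    (hT : 0 < T) :
    T ≤ c * s ↔ q ≤ c * q / T * s ∧ T - q ≤ c * (T - q) / T * s := by
  have hscale : ∀ r, r ≤ c * r / T * s ↔ r * T ≤ r * (c * s) := fun r => by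
    rw [div_mul_eq_mul_div, le_div_iff₀ hT]; ring_nf
  rw [hscale, hscale]
  constructor
  · intro h
    exact ⟨by nlinarith, by nlinarith⟩
  · rintro ⟨h₁, h₂⟩
    nlinarith

/-- A square-integrable random vector `υ` in `ℝ^d` with `E[υ] = g ≠ 0`
and covariance matrix `Cov` satisfies `E[‖υ − g‖²] = trace(Cov)`; consequently, if
`θ² := ε²·⟨ê, Cov ê⟩/trace(Cov)` and `ν² := ε²·(trace(Cov) − ⟨ê, Cov ê⟩)/trace(Cov)`
(assuming `trace(Cov) > 0`), where `ê := g/‖g‖`, then `θ² + ν² = ε²`, and the norm test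
`E[‖υ − g‖²] ≤ ε²‖g‖²` holds iff both the inner product test `Var(⟨υ, ê⟩) ≤ θ²‖g‖²` and
the orthogonality test `E[‖υ − ⟨υ, ê⟩ • ê‖²] ≤ ν²‖g‖²` hold. -/
theorem trace_and_norm_test_iff_component_tests {d : ℕ} {Ω : Type*}
    [MeasurableSpace Ω] (μ : Measure Ω) [IsProbabilityMeasure μ]
    (υ : Ω → EuclideanSpace ℝ (Fin d)) (g : EuclideanSpace ℝ (Fin d)) (hg : g ≠ 0)
    (hsq : MemLp υ 2 μ)
    (hmean : ∫ ω, υ ω ∂μ = g)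
    (Cov : Matrix (Fin d) (Fin d) ℝ)
    (hCov : ∀ i j, Cov i j = ∫ ω, (υ ω i - g i) * (υ ω j - g j) ∂μ)
    (ehat : EuclideanSpace ℝ (Fin d)) (hehat : ehat = ‖g‖⁻¹ • g)
    (htrace : 0 < Cov.trace)
    (ε : ℝ)
    (q θsq νsq : ℝ)
    (hq : q = ∑ i, ∑ j, ehat i * Cov i j * ehat j)
    (hθsq : θsq = ε ^ 2 * q / Cov.trace)
    (hνsq : νsq = ε ^ 2 * (Cov.trace - q) / Cov.trace) :
    (∫ ω, ‖υ ω - g‖ ^ 2 ∂μ = Cov.trace) ∧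
    θsq + νsq = ε ^ 2 ∧
    ((∫ ω, ‖υ ω - g‖ ^ 2 ∂μ ≤ ε ^ 2 * ‖g‖ ^ 2) ↔
      (variance (fun ω => ⟪υ ω, ehat⟫) μ ≤ θsq * ‖g‖ ^ 2 ∧
       ∫ ω, ‖υ ω - ⟪υ ω, ehat⟫ • ehat‖ ^ 2 ∂μ ≤ νsq * ‖g‖ ^ 2)) := by
  have he : ‖ehat‖ = 1 := by rw [hehat]; exact norm_smul_inv_norm hg
  have hmean_par : ∫ ω, υ ω ∂μ = ‖g‖ • ehat := by
    rw [hmean, hehat, smul_smul, mul_inv_cancel₀ (norm_ne_zero_iff.2 hg), one_smul]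
  have hCov' : ∀ i j, Cov i j = cov[fun ω => υ ω i, fun ω => υ ω j; μ] := fun i j => by
    rw [hCov, covariance_eval_eq_integral (hsq.integrable one_le_two), hmean]
  have hT : ∫ ω, ‖υ ω - g‖ ^ 2 ∂μ = Cov.trace := by
    rw [← hmean, integral_norm_sub_integral_sq_eq_sum_variance hsq]
    simp only [Matrix.trace, Matrix.diag, hCov', covariance_self (hsq.eval_piLp _).aemeasurable]
  have hvar : Var[fun ω => ⟪υ ω, ehat⟫; μ] = q := by
    rw [hq, variance_inner_eq_sum_covariance hsq]
    simp_rw [hCov']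
  have horth : ∫ ω, ‖υ ω - ⟪υ ω, ehat⟫ • ehat‖ ^ 2 ∂μ = Cov.trace - q := by
    rw [← hT, ← hvar, ← hmean, integral_norm_sub_integral_sq_eq_variance_add hsq he hmean_par]
    ring
  refine ⟨hT, by rw [hθsq, hνsq]; field_simp; ring, ?_⟩
  rw [hT, hvar, horth, hθsq, hνsq]
  refine le_mul_iff_le_mul_div_and_sub_le_mul_div (hvar ▸ variance_nonneg _ _) ?_ htrace
  linarith [horth ▸ integral_nonneg fun ω => sq_nonneg ‖υ ω - ⟪υ ω, ehat⟫ • ehat‖]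
end

section
/- (One-step SGD contraction under the norm test) Let F : ℝ^d → ℝ be differentiable with L-Lipschitz gradient and μ-strongly convex with 0 < μ ≤ L, and let ξ* be its (unique) global minimizer. Fix x ∈ ℝ^d and ε > 0, and let υ be a square-integrable random vector in ℝ^d with E[υ] = ∇F(x) and E[‖υ − ∇F(x)‖²] ≤ ε²‖∇F(x)‖². Then with step size η = 2/((L+μ)(1+ε²)), the update x⁺ := x − η·υ satisfies E[‖x⁺ − ξ*‖²] ≤ ρ·‖x − ξ*‖², where ρ = (((κ−1)/(κ+1))² + ε²)/(1 + ε²) and κ = L/μ. -/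
/-!
Split the mean-square distance into the deterministic gradient step plus `η²` times the variance
of `υ` (bias–variance). The norm test bounds the variance by `ε²‖∇F(x)‖²`, so everything reduces to
the deterministic estimate `‖e - η g‖² + η² ε² ‖g‖² ≤ ρ ‖e‖²` for `e = x - ξ*`, `g = ∇F(x)`. This
follows from the coercivity inequality `‖g‖² + μL‖e‖² ≤ (L + μ)⟪g, e⟫` of `μ`-strongly convex,
`L`-smooth functions (Nesterov, Thm. 2.1.12), which in turn is co-coercivity of the convex,
`(L - μ)`-smooth function `F - (μ/2)‖·‖²`.
-/

open MeasureTheory ProbabilityTheory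
open scoped RealInnerProductSpace

section Smooth

variable {E : Type*} [NormedAddCommGroup E] [InnerProductSpace ℝ E]

theorem IsLocalMin.hasGradientAt_eq_zero [CompleteSpace E] {f : E → ℝ} {a g : E}
    (h : IsLocalMin f a) (hf : HasGradientAt f g a) : g = 0 := by
  simpa using h.hasFDerivAt_eq_zero hf.hasFDerivAt

theorem HasGradientAt.hasDerivAt_comp_add_smul [CompleteSpace E] {f : E → ℝ} {g x v : E} {t : ℝ}
    (hf : HasGradientAt f g (x + t • v)) :
    HasDerivAt (fun s : ℝ => f (x + s • v)) ⟪g, v⟫ t := by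
  have hline : HasDerivAt (fun s : ℝ => x + s • v) v t := by
    simpa using ((hasDerivAt_id t).smul_const v).const_add x
  have h := hf.hasFDerivAt.comp_hasDerivAt t hline
  simp only [InnerProductSpace.toDual_apply_apply] at h
  exact h

theorem le_add_inner_add_sq_of_lipschitz_gradient [CompleteSpace E] {F : E → ℝ} {g : E → E}
    {L : ℝ} (hgrad : ∀ x, HasGradientAt F (g x) x)
    (hLip : ∀ x y, ‖g x - g y‖ ≤ L * ‖x - y‖) (x y : E) :
    F y ≤ F x + ⟪g x, y - x⟫ + L / 2 * ‖y - x‖ ^ 2 := by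
  set v := y - x
  set ψ : ℝ → ℝ := fun t => F x + t * ⟪g x, v⟫ + L / 2 * t ^ 2 * ‖v‖ ^ 2 - F (x + t • v)
  have hψ : ∀ t, HasDerivAt ψ (⟪g x, v⟫ + L * t * ‖v‖ ^ 2 - ⟪g (x + t • v), v⟫) t := by
    intro t
    have := (((hasDerivAt_id t).mul_const ⟪g x, v⟫).const_add (F x)).add
      (((hasDerivAt_pow 2 t).const_mul (L / 2)).mul_const (‖v‖ ^ 2))
    refine (this.sub (hgrad (x + t • v)).hasDerivAt_comp_add_smul).congr_deriv ?_
    ring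
  have hψ_nonneg : ∀ t ∈ interior (Set.Ici (0 : ℝ)),
      0 ≤ ⟪g x, v⟫ + L * t * ‖v‖ ^ 2 - ⟪g (x + t • v), v⟫ := by
    intro t ht
    rw [interior_Ici, Set.mem_Ioi] at ht
    have hlip : ‖g (x + t • v) - g x‖ ≤ L * (t * ‖v‖) := by
      simpa [norm_smul, abs_of_pos ht] using hLip (x + t • v) x
    have := real_inner_le_norm (g (x + t • v) - g x) v
    rw [inner_sub_left] at this
    nlinarith [mul_le_mul_of_nonneg_right hlip (norm_nonneg v)]
  have hmono := monotoneOn_of_hasDerivWithinAt_nonneg (convex_Ici 0)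
    (fun t _ => (hψ t).continuousAt.continuousWithinAt) (fun t _ => (hψ t).hasDerivWithinAt)
    hψ_nonneg
  have h01 : ψ 0 ≤ ψ 1 := hmono Set.self_mem_Ici (by norm_num) zero_le_one
  simpa [ψ, v] using h01

theorem mul_sq_norm_sub_le_inner_of_strongConvex {F : E → ℝ} {g : E → E} {μ : ℝ}
    (hsc : ∀ x y, F y ≥ F x + ⟪g x, y - x⟫ + μ / 2 * ‖y - x‖ ^ 2) (a b : E) :
    μ * ‖a - b‖ ^ 2 ≤ ⟪g a - g b, a - b⟫ := by
  have hab := hsc a b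
  have hba := hsc b a
  rw [← neg_sub a b, inner_neg_right, norm_neg] at hab
  rw [inner_sub_left]
  linarith

theorem add_inner_add_sq_norm_le_of_convex_of_smooth {h : E → ℝ} {g : E → E} {M : ℝ} (hM : 0 < M)
    (hconv : ∀ p q, h p + ⟪g p, q - p⟫ ≤ h q)
    (hsmooth : ∀ p q, h q ≤ h p + ⟪g p, q - p⟫ + M / 2 * ‖q - p‖ ^ 2) (p q : E) :
    h p + ⟪g p, q - p⟫ + 1 / (2 * M) * ‖g q - g p‖ ^ 2 ≤ h q := by
  set w := g q - g p
  -- `z` minimizes the quadratic upper model of `h` at `q`.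
  set z := q - M⁻¹ • w
  have hlow := hconv p z
  have hup := hsmooth q z
  have hzp : z - p = (q - p) - M⁻¹ • w := by simp only [z]; abel
  have hzq : z - q = -(M⁻¹ • w) := by simp only [z]; abel
  rw [hzp, inner_sub_right, real_inner_smul_right] at hlow
  rw [hzq, inner_neg_right, real_inner_smul_right, norm_neg, norm_smul, mul_pow,
    Real.norm_eq_abs, sq_abs] at hup
  have hw : M⁻¹ * ⟪g q, w⟫ - M⁻¹ * ⟪g p, w⟫ = M⁻¹ * ‖w‖ ^ 2 := by
    rw [← mul_sub, ← inner_sub_left, real_inner_self_eq_norm_sq]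
  have hcoef : M / 2 * (M⁻¹ ^ 2 * ‖w‖ ^ 2) = 1 / (2 * M) * ‖w‖ ^ 2 := by
    field_simp
  have hcoef' : M⁻¹ * ‖w‖ ^ 2 = 2 * (1 / (2 * M) * ‖w‖ ^ 2) := by
    field_simp
  linarith

theorem sq_norm_sub_le_mul_inner_of_convex_of_smooth {h : E → ℝ} {g : E → E} {M : ℝ}
    (hM : 0 < M) (hconv : ∀ p q, h p + ⟪g p, q - p⟫ ≤ h q)
    (hsmooth : ∀ p q, h q ≤ h p + ⟪g p, q - p⟫ + M / 2 * ‖q - p‖ ^ 2) (a b : E) :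
    ‖g a - g b‖ ^ 2 ≤ M * ⟪g a - g b, a - b⟫ := by
  have hab := add_inner_add_sq_norm_le_of_convex_of_smooth hM hconv hsmooth a b
  have hba := add_inner_add_sq_norm_le_of_convex_of_smooth hM hconv hsmooth b a
  rw [norm_sub_rev, ← neg_sub a b, inner_neg_right] at hab
  have hsum : 2 * (1 / (2 * M) * ‖g a - g b‖ ^ 2) ≤ ⟪g a - g b, a - b⟫ := by
    rw [inner_sub_left]; linarith
  calc ‖g a - g b‖ ^ 2 = M * (2 * (1 / (2 * M) * ‖g a - g b‖ ^ 2)) := by field_simp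
    _ ≤ M * ⟪g a - g b, a - b⟫ := by gcongr

theorem sq_norm_sub_add_mul_sq_norm_sub_le_of_strongConvex [CompleteSpace E] {F : E → ℝ}
    {g : E → E} {L μ : ℝ} (hμ : 0 ≤ μ) (hμL : μ ≤ L) (hgrad : ∀ x, HasGradientAt F (g x) x)
    (hLip : ∀ x y, ‖g x - g y‖ ≤ L * ‖x - y‖)
    (hsc : ∀ x y, F y ≥ F x + ⟪g x, y - x⟫ + μ / 2 * ‖y - x‖ ^ 2) (a b : E) :
    ‖g a - g b‖ ^ 2 + μ * L * ‖a - b‖ ^ 2 ≤ (L + μ) * ⟪g a - g b, a - b⟫ := by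
  have hmono := mul_sq_norm_sub_le_inner_of_strongConvex hsc a b
  rcases hμL.eq_or_lt with rfl | hlt
  · have hlip : ‖g a - g b‖ ^ 2 ≤ (μ * ‖a - b‖) ^ 2 :=
      pow_le_pow_left₀ (norm_nonneg _) (hLip a b) 2
    linear_combination hlip + 2 * mul_le_mul_of_nonneg_left hmono hμ
  -- `F - (μ/2)‖·‖²` is convex with `(L - μ)`-smooth gradient `g - μ • id`.
  have hshift : ∀ p q : E, ⟪g p, q - p⟫ + μ / 2 * ‖q - p‖ ^ 2 - (μ / 2 * ‖q‖ ^ 2 - μ / 2 * ‖p‖ ^ 2)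
      = ⟪g p - μ • p, q - p⟫ := by
    intro p q
    have hq : ‖q‖ ^ 2 = ‖p‖ ^ 2 + 2 * ⟪p, q - p⟫ + ‖q - p‖ ^ 2 := by
      rw [← norm_add_sq_real, add_sub_cancel]
    rw [inner_sub_left, real_inner_smul_left, hq]
    ring
  have hcoco := sq_norm_sub_le_mul_inner_of_convex_of_smooth (h := fun z => F z - μ / 2 * ‖z‖ ^ 2)
    (g := fun z => g z - μ • z) (sub_pos.2 hlt)
    (fun p q => by linarith [hsc p q, hshift p q])
    (fun p q => by
      linarith [le_add_inner_add_sq_of_lipschitz_gradient hgrad hLip p q, hshift p q]) a b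
  have hdiff : g a - μ • a - (g b - μ • b) = (g a - g b) - μ • (a - b) := by
    rw [smul_sub]; abel
  have hnorm : ‖(g a - g b) - μ • (a - b)‖ ^ 2
      = ‖g a - g b‖ ^ 2 - 2 * μ * ⟪g a - g b, a - b⟫ + μ ^ 2 * ‖a - b‖ ^ 2 := by
    rw [norm_sub_sq_real, real_inner_smul_right, norm_smul, mul_pow, Real.norm_eq_abs, sq_abs]
    ring
  have hinner : ⟪(g a - g b) - μ • (a - b), a - b⟫ = ⟪g a - g b, a - b⟫ - μ * ‖a - b‖ ^ 2 := by
    rw [inner_sub_left, real_inner_smul_left, real_inner_self_eq_norm_sq]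
  rw [hdiff, hnorm, hinner] at hcoco
  linear_combination hcoco

theorem sq_norm_sub_smul_add_le_of_coercive {g e : E} {L μ ε η : ℝ} (hLμ : 0 < L + μ)
    (hcoer : ‖g‖ ^ 2 + μ * L * ‖e‖ ^ 2 ≤ (L + μ) * ⟪g, e⟫)
    (hη : η = 2 / ((L + μ) * (1 + ε ^ 2))) :
    ‖e - η • g‖ ^ 2 + η ^ 2 * (ε ^ 2 * ‖g‖ ^ 2)
      ≤ (((L - μ) / (L + μ)) ^ 2 + ε ^ 2) / (1 + ε ^ 2) * ‖e‖ ^ 2 := by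
  have hη_nonneg : 0 ≤ η := by rw [hη]; positivity
  have hfactor : (((L - μ) / (L + μ)) ^ 2 + ε ^ 2) / (1 + ε ^ 2)
      = 1 - η * (2 * μ * L / (L + μ)) := by
    rw [hη]; field_simp; ring
  have hvariance : η ^ 2 * (1 + ε ^ 2) = η * (2 / (L + μ)) := by
    rw [hη]; field_simp
  have hinner : (‖g‖ ^ 2 + μ * L * ‖e‖ ^ 2) / (L + μ) ≤ ⟪g, e⟫ := by
    rw [div_le_iff₀ hLμ]; linarith
  rw [norm_sub_sq_real, real_inner_smul_right, norm_smul, mul_pow, Real.norm_eq_abs, sq_abs,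
    real_inner_comm, hfactor]
  linear_combination 2 * mul_le_mul_of_nonneg_left hinner hη_nonneg + ‖g‖ ^ 2 * hvariance

end Smooth

section BiasVariance

variable {Ω E : Type*} [MeasurableSpace Ω] {P : Measure Ω} [IsProbabilityMeasure P]
  [NormedAddCommGroup E] [InnerProductSpace ℝ E] [CompleteSpace E]

theorem integral_sq_norm_sub_eq_add_integral_sq_norm_sub_integral {X : Ω → E}
    (hX : MemLp X 2 P) (b : E) :
    ∫ ω, ‖X ω - b‖ ^ 2 ∂P = ‖P[X] - b‖ ^ 2 + ∫ ω, ‖X ω - P[X]‖ ^ 2 ∂P := by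
  have hdev : MemLp (fun ω => X ω - P[X]) 2 P := hX.sub (memLp_const _)
  have hdev_int : Integrable (fun ω => X ω - P[X]) P := hdev.integrable one_le_two
  have hdev_sq : Integrable (fun ω => ‖X ω - P[X]‖ ^ 2) P :=
    (memLp_two_iff_integrable_sq_norm hdev.aestronglyMeasurable).1 hdev
  have hcross : ∫ ω, ⟪P[X] - b, X ω - P[X]⟫ ∂P = 0 := by
    rw [integral_inner hdev_int, integral_sub (hX.integrable one_le_two) (integrable_const _),
      integral_const, probReal_univ, one_smul, sub_self, inner_zero_right]
  have hsplit : ∀ ω, ‖X ω - b‖ ^ 2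
      = ‖P[X] - b‖ ^ 2 + 2 * ⟪P[X] - b, X ω - P[X]⟫ + ‖X ω - P[X]‖ ^ 2 := fun ω => by
    rw [← norm_add_sq_real, sub_add_sub_cancel']
  have hcross_int : Integrable (fun ω => 2 * ⟪P[X] - b, X ω - P[X]⟫) P :=
    (hdev_int.const_inner _).const_mul 2
  simp_rw [hsplit]
  rw [integral_add ((integrable_const _).fun_add hcross_int) hdev_sq,
    integral_add (integrable_const _) hcross_int, integral_const_mul,
    hcross, integral_const, probReal_univ, one_smul, mul_zero, add_zero]

theorem integral_sq_norm_sub_smul_sub {υ : Ω → E} (hυ : MemLp υ 2 P) (x y : E) (η : ℝ) :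
    ∫ ω, ‖(x - η • υ ω) - y‖ ^ 2 ∂P
      = ‖(x - η • P[υ]) - y‖ ^ 2 + η ^ 2 * ∫ ω, ‖υ ω - P[υ]‖ ^ 2 ∂P := by
  have hstep : MemLp (fun ω => x - η • υ ω) 2 P := (memLp_const x).sub (hυ.const_smul η)
  have hsmul : Integrable (fun ω => η • υ ω) P := (hυ.integrable one_le_two).smul η
  have hmean : ∫ ω, x - η • υ ω ∂P = x - η • P[υ] := by
    rw [integral_sub (integrable_const _) hsmul, integral_const,
      probReal_univ, one_smul, integral_smul]
  have hdev : ∀ ω, ‖(x - η • υ ω) - (x - η • P[υ])‖ ^ 2 = η ^ 2 * ‖υ ω - P[υ]‖ ^ 2 := fun ω => by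
    rw [sub_sub_sub_cancel_left, ← smul_sub, norm_smul, mul_pow, Real.norm_eq_abs, sq_abs,
      norm_sub_rev]
  rw [integral_sq_norm_sub_eq_add_integral_sq_norm_sub_integral hstep, hmean]
  simp_rw [hdev]
  rw [integral_const_mul]

end BiasVariance

theorem sgd_one_step_contraction_norm_test_general {d : ℕ} {Ω : Type*} [MeasurableSpace Ω]
    (P : Measure Ω) [IsProbabilityMeasure P]
    (F : EuclideanSpace ℝ (Fin d) → ℝ) (gradF : EuclideanSpace ℝ (Fin d) → EuclideanSpace ℝ (Fin d))
    (hgrad : ∀ x, HasGradientAt F (gradF x) x)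
    (L μ : ℝ) (hμ : 0 < μ) (hμL : μ ≤ L)
    (hLip : ∀ x y, ‖gradF x - gradF y‖ ≤ L * ‖x - y‖)
    (hsc : ∀ x y, F y ≥ F x + ⟪gradF x, y - x⟫ + μ / 2 * ‖y - x‖ ^ 2)
    (ξstar : EuclideanSpace ℝ (Fin d)) (hmin : ∀ y, F ξstar ≤ F y)
    (x : EuclideanSpace ℝ (Fin d)) (ε : ℝ)
    (υ : Ω → EuclideanSpace ℝ (Fin d))
    (hsq : MemLp υ 2 P)
    (hmean : ∫ ω, υ ω ∂P = gradF x)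
    (hnormtest : ∫ ω, ‖υ ω - gradF x‖ ^ 2 ∂P ≤ ε ^ 2 * ‖gradF x‖ ^ 2)
    (η : ℝ) (hη : η = 2 / ((L + μ) * (1 + ε ^ 2)))
    (κ ρ : ℝ) (hκ : κ = L / μ)
    (hρ : ρ = (((κ - 1) / (κ + 1)) ^ 2 + ε ^ 2) / (1 + ε ^ 2)) :
    ∫ ω, ‖(x - η • υ ω) - ξstar‖ ^ 2 ∂P ≤ ρ * ‖x - ξstar‖ ^ 2 := by
  have hgrad_min : gradF ξstar = 0 :=
    IsLocalMin.hasGradientAt_eq_zero (Filter.Eventually.of_forall hmin) (hgrad ξstar)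
  have hcoer := sq_norm_sub_add_mul_sq_norm_sub_le_of_strongConvex hμ.le hμL hgrad hLip hsc x ξstar
  rw [hgrad_min, sub_zero] at hcoer
  have hρ_eq : ρ = (((L - μ) / (L + μ)) ^ 2 + ε ^ 2) / (1 + ε ^ 2) := by
    rw [hρ, hκ]
    congr 3
    field_simp
  rw [integral_sq_norm_sub_smul_sub hsq, hmean, sub_right_comm, hρ_eq]
  calc _ ≤ ‖(x - ξstar) - η • gradF x‖ ^ 2 + η ^ 2 * (ε ^ 2 * ‖gradF x‖ ^ 2) := by gcongr
    _ ≤ _ := sq_norm_sub_smul_add_le_of_coercive (by linarith) hcoer hη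

/-- **One-step SGD contraction under the norm test.** Let `F : ℝ^d → ℝ`
be differentiable with `L`-Lipschitz gradient and `μ`-strongly convex with `0 < μ ≤ L`,
with global minimizer `ξ*`. Fix `x` and `ε > 0`, and let `υ` be a square-integrable
random vector with `E[υ] = ∇F(x)` and `E[‖υ − ∇F(x)‖²] ≤ ε²‖∇F(x)‖²`. Then with step
size `η = 2/((L+μ)(1+ε²))`, the update `x⁺ := x − η•υ` satisfies
`E[‖x⁺ − ξ*‖²] ≤ ρ‖x − ξ*‖²`, where `ρ = (((κ−1)/(κ+1))² + ε²)/(1 + ε²)`, `κ = L/μ`. -/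
theorem sgd_one_step_contraction_norm_test {d : ℕ} {Ω : Type*} [MeasurableSpace Ω]
    (P : Measure Ω) [IsProbabilityMeasure P]
    (F : EuclideanSpace ℝ (Fin d) → ℝ) (gradF : EuclideanSpace ℝ (Fin d) → EuclideanSpace ℝ (Fin d))
    (hgrad : ∀ x, HasGradientAt F (gradF x) x)
    (L μ : ℝ) (hμ : 0 < μ) (hμL : μ ≤ L)
    (hLip : ∀ x y, ‖gradF x - gradF y‖ ≤ L * ‖x - y‖)
    (hsc : ∀ x y, F y ≥ F x + ⟪gradF x, y - x⟫ + μ / 2 * ‖y - x‖ ^ 2)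
    (ξstar : EuclideanSpace ℝ (Fin d)) (hmin : ∀ y, F ξstar ≤ F y)
    (x : EuclideanSpace ℝ (Fin d)) (ε : ℝ) (hε : 0 < ε)
    (υ : Ω → EuclideanSpace ℝ (Fin d))
    (hsq : MemLp υ 2 P)
    (hmean : ∫ ω, υ ω ∂P = gradF x)
    (hnormtest : ∫ ω, ‖υ ω - gradF x‖ ^ 2 ∂P ≤ ε ^ 2 * ‖gradF x‖ ^ 2)
    (η : ℝ) (hη : η = 2 / ((L + μ) * (1 + ε ^ 2)))
    (κ ρ : ℝ) (hκ : κ = L / μ)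
    (hρ : ρ = (((κ - 1) / (κ + 1)) ^ 2 + ε ^ 2) / (1 + ε ^ 2)) :
    ∫ ω, ‖(x - η • υ ω) - ξstar‖ ^ 2 ∂P ≤ ρ * ‖x - ξstar‖ ^ 2 :=
  sgd_one_step_contraction_norm_test_general P F gradF hgrad L μ hμ hμL hLip hsc ξstar hmin x ε υ
    hsq hmean hnormtest η hη κ ρ hκ hρ
end
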